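/- (Optimality of unravelings.) Let q(x) be a CQ and d ≥ 1. If q'(x) is a complete tree-like approximation of q of depth at most d, then q̃_d ⊆ q'; that is, the depth-d unraveling is the best possible complete tree-like approximation of q among all those of depth at most d. -/

import Mathlib

/-!
Formalization of conjunctive queries (CQs) over knowledge graphs, homomorphisms,
paths, valid paths, unravelings, query graphs and tree-likeness, following the
paper "Approximate Answering of Graph Queries" setting.
-/

namespace KGQuery

/-- Constants: a countably infinite set. -/
abbrev Con : Type := ℕ

/-- Variables: a countably infinite set (disjoint from the constants via `Term`). -/
abbrev Var : Type := ℕ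

/-- Terms are variables or constants. -/
inductive Term : Type
  | var : Var → Term
  | con : Con → Term
deriving DecidableEq

/-- An atom `R(y, z)` with `y, z` terms. -/
structure Atom (Rel : Type) : Type where
  rel : Rel
  src : Term
  tgt : Term
deriving DecidableEq

/-- A fact `R(a, b)` with `a, b` constants. -/
structure Fact (Rel : Type) : Type where
  rel : Rel
  src : Con
  tgt : Con
deriving DecidableEq

/-- A knowledge graph: a finite set of facts. -/
abbrev KG (Rel : Type) : Type := Finset (Fact Rel)

/-- A (unary) conjunctive query: a finite nonempty set of atoms in which the
target variable occurs. -/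
structure CQ (Rel : Type) : Type where
  target : Var
  atoms : Finset (Atom Rel)
  atoms_nonempty : atoms.Nonempty
  target_occurs : ∃ A ∈ atoms, A.src = Term.var target ∨ A.tgt = Term.var target

variable {Rel : Type}

/-- The terms occurring in the atoms of a CQ. -/
def CQ.terms (q : CQ Rel) : Set Term :=
  {t | ∃ A ∈ q.atoms, A.src = t ∨ A.tgt = t}

/-- `Var(q)`: the variables occurring in `q`. -/
def CQ.vars (q : CQ Rel) : Set Var := {v | Term.var v ∈ q.terms}

/-- `Con(q)`: the constants occurring in `q`. -/
def CQ.cons (q : CQ Rel) : Set Con := {c | Term.con c ∈ q.terms}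

/-- The answer `q(G)` of a CQ `q` over a knowledge graph `G`: the set of constants
`a` such that some assignment `μ` fixing the constants of `q` maps the target
variable to `a` and every atom of `q` to a fact of `G`. -/
def CQ.answer (q : CQ Rel) (G : KG Rel) : Set Con :=
  {a | ∃ μ : Term → Con,
    (∀ c ∈ q.cons, μ (Term.con c) = c) ∧
    μ (Term.var q.target) = a ∧
    ∀ A ∈ q.atoms, (⟨A.rel, μ A.src, μ A.tgt⟩ : Fact Rel) ∈ G}

/-- Containment `q ⊆ q'`: the answers of `q` are contained in those of `q'`
over every knowledge graph. -/
def CQ.contained (q q' : CQ Rel) : Prop :=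
  ∀ G : KG Rel, q.answer G ⊆ q'.answer G

/-- A homomorphism from `q` to `q'`: maps the target variable of `q` to the target
variable of `q'`, fixes the constants of `q`, and maps every atom of `q` to an
atom of `q'`. -/
def IsHom (q q' : CQ Rel) (h : Term → Term) : Prop :=
  h (Term.var q.target) = Term.var q'.target ∧
  (∀ c ∈ q.cons, h (Term.con c) = Term.con c) ∧
  ∀ A ∈ q.atoms, (⟨A.rel, h A.src, h A.tgt⟩ : Atom Rel) ∈ q'.atoms

/-! ### The canonical database -/

/-- Replace variables by constants using `ι`. -/
def termToCon (ι : Var → Con) : Term → Con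
  | Term.var v => ι v
  | Term.con c => c

/-- The canonical database of `q`: the knowledge graph obtained from the atoms of
`q` by replacing each variable `v` by the constant `ι v`. -/
def canonicalDB [DecidableEq Rel] (q : CQ Rel) (ι : Var → Con) : KG Rel :=
  q.atoms.image (fun A => ⟨A.rel, termToCon ι A.src, termToCon ι A.tgt⟩)

/-! ### Paths and valid paths -/

/-- The atom `A` is traversed from `u` to `v`: forward (`A = R(u,v)`) or
backward (`A = R(v,u)`). -/
def Traverses (A : Atom Rel) (u v : Term) : Prop :=
  (A.src = u ∧ A.tgt = v) ∨ (A.src = v ∧ A.tgt = u)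

/-- A path starting at the term `u`, encoded as its list of steps `(Aᵢ, xᵢ)`:
each atom `Aᵢ` belongs to `q` and is traversed from `xᵢ₋₁` to `xᵢ`. -/
def IsPathFrom (q : CQ Rel) : Term → List (Atom Rel × Term) → Prop
  | _, [] => True
  | u, (A, v) :: rest => A ∈ q.atoms ∧ Traverses A u v ∧ IsPathFrom q v rest

/-- A path of `q(x)`: a path starting at the target variable `x`.
The path `x₀, A₁, x₁, …, A_k, x_k` is encoded as the list `[(A₁,x₁),…,(A_k,x_k)]`,
whose length `k` is the length of the path. -/
def IsPath (q : CQ Rel) (P : List (Atom Rel × Term)) : Prop :=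
  IsPathFrom q (Term.var q.target) P

/-- The end of a path (the target variable for the path of length `0`). -/
def pathEnd (q : CQ Rel) (P : List (Atom Rel × Term)) : Term :=
  match P.getLast? with
  | none => Term.var q.target
  | some s => s.2

/-- Validity: no two consecutive steps traverse the same atom. -/
def IsValid (P : List (Atom Rel × Term)) : Prop :=
  (P.map Prod.fst).Chain' (· ≠ ·)

/-- A valid path of `q`. -/
def IsValidPath (q : CQ Rel) (P : List (Atom Rel × Term)) : Prop :=
  IsPath q P ∧ IsValid P

/-- A path is unanchored if it ends at a variable (anchored if it ends at a
constant). -/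
def Unanchored (q : CQ Rel) (P : List (Atom Rel × Term)) : Prop :=
  ∃ v : Var, pathEnd q P = Term.var v

/-! ### Unravelings -/

/-- The term `o_P` of the unraveling associated to a valid path `P`: the fresh
variable `z_P = enc P` if `P` is unanchored, and the constant `end(P)` otherwise. -/
def oTerm (q : CQ Rel) (enc : List (Atom Rel × Term) → Var)
    (P : List (Atom Rel × Term)) : Term :=
  match pathEnd q P with
  | Term.var _ => Term.var (enc P)
  | Term.con c => Term.con c

/-- The set of atoms of the unraveling `q̃_d` of `q`: for every valid path
`P' = P, A', end(P')` of length at most `d`, the atom `R(o_P, o_{P'})` if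
`A' = R(end(P), end(P'))`, and the atom `R(o_{P'}, o_P)` if
`A' = R(end(P'), end(P))`. -/
def UnravelAtoms (q : CQ Rel) (enc : List (Atom Rel × Term) → Var) (d : ℕ) :
    Set (Atom Rel) :=
  {B | ∃ (P : List (Atom Rel × Term)) (A' : Atom Rel) (t' : Term),
    IsValidPath q (P ++ [(A', t')]) ∧ P.length + 1 ≤ d ∧
    ((A'.src = pathEnd q P ∧ A'.tgt = t' ∧
        B = ⟨A'.rel, oTerm q enc P, oTerm q enc (P ++ [(A', t')])⟩) ∨
     (A'.src = t' ∧ A'.tgt = pathEnd q P ∧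
        B = ⟨A'.rel, oTerm q enc (P ++ [(A', t')]), oTerm q enc P⟩))}

/-- `qd` is (a presentation of) the unraveling `q̃_d` of `q`, where the injective
map `enc` provides the distinct fresh variables `z_P` indexing the unanchored
valid paths: its target variable is `z_{P₀} = enc []` and its atoms are exactly
the unraveling atoms. -/
def IsUnraveling (q : CQ Rel) (enc : List (Atom Rel × Term) → Var) (d : ℕ)
    (qd : CQ Rel) : Prop :=
  Function.Injective enc ∧ qd.target = enc [] ∧
    (↑qd.atoms : Set (Atom Rel)) = UnravelAtoms q enc d

/-! ### Query graphs and tree-likeness -/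

/-- Nodes of the query graph of a CQ: either a variable, or an occurrence of a
constant in an atom (`false` = source position, `true` = target position). -/
abbrev QNode (Rel : Type) : Type := Var ⊕ (Atom Rel × Bool)

/-- The term at position `b` of an atom. -/
def Atom.pos (A : Atom Rel) (b : Bool) : Term := cond b A.tgt A.src

/-- The node of the query graph corresponding to position `b` of atom `A`:
the variable itself, or the occurrence node for a constant. -/
def endpointNode (A : Atom Rel) (b : Bool) : QNode Rel :=
  match A.pos b with
  | Term.var v => Sum.inl v
  | Term.con _ => Sum.inr (A, b)

/-- The node set of the query graph of `q`: the variables of `q` together with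
one node per occurrence of a constant in an atom of `q`. -/
def nodeSet (q : CQ Rel) : Set (QNode Rel) :=
  (Sum.inl '' q.vars) ∪
    {n | ∃ A ∈ q.atoms, ∃ b : Bool, (∃ c : Con, A.pos b = Term.con c) ∧
      n = Sum.inr (A, b)}

/-- Adjacency in the query graph of `q`: one (undirected) edge per atom. -/
def Adj (q : CQ Rel) (m n : QNode Rel) : Prop :=
  ∃ A ∈ q.atoms,
    (m = endpointNode A false ∧ n = endpointNode A true) ∨
    (m = endpointNode A true ∧ n = endpointNode A false)

/-- The root of the query graph of a CQ: its target variable. -/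
def rootNode (q : CQ Rel) : QNode Rel := Sum.inl q.target

/-- `q` is tree-like: its query graph is a tree rooted at the target variable,
i.e. every node is connected to the root and the number of edges (= atoms) is one
less than the number of nodes. -/
def IsTreeLike (q : CQ Rel) : Prop :=
  (∀ n ∈ nodeSet q, Relation.ReflTransGen (Adj q) (rootNode q) n) ∧
  (nodeSet q).ncard = q.atoms.card + 1

/-- Reachability in at most `d` steps of a relation. -/
def ReachIn {α : Type*} (r : α → α → Prop) : ℕ → α → α → Prop
  | 0, a, b => a = b
  | n + 1, a, b => a = b ∨ ∃ c, r a c ∧ ReachIn r n c b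

/-- The (rooted) query graph of `q` has depth at most `d`: every node is within
distance `d` of the root. -/
def HasDepthLE (q : CQ Rel) (d : ℕ) : Prop :=
  ∀ n ∈ nodeSet q, ReachIn (Adj q) d (rootNode q) n

/-- The depth of (the query graph of) a tree-like CQ: the length of the longest
path from the root to a node. -/
noncomputable def depth (q : CQ Rel) : ℕ := sInf {d : ℕ | HasDepthLE q d}

/-! ### Reduction of paths to valid paths -/

/-- One step of reduction: replace a subsequence `y, A, z, A, y` by `y`. -/
def PathReduce (q : CQ Rel) (P Q : List (Atom Rel × Term)) : Prop :=
  ∃ (L1 : List (Atom Rel × Term)) (A : Atom Rel) (z y : Term)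
    (L2 : List (Atom Rel × Term)),
    pathEnd q L1 = y ∧ P = L1 ++ (A, z) :: (A, y) :: L2 ∧ Q = L1 ++ L2

/-- Append one step to an already valid path, cancelling a backtracking step. -/
def validAppend [DecidableEq Rel] (P : List (Atom Rel × Term))
    (s : Atom Rel × Term) : List (Atom Rel × Term) :=
  match P.getLast? with
  | none => [s]
  | some t => if t.1 = s.1 then P.dropLast else P ++ [s]

/-- `valid(P)`: the unique valid path obtained from the path `P` by iteratively
replacing subsequences of the form `y, A, z, A, y` by `y`. -/
def validify [DecidableEq Rel] (P : List (Atom Rel × Term)) :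
    List (Atom Rel × Term) :=
  P.foldl validAppend []

/-- The image of an atom under a map on terms. -/
def Atom.mapTerms (h : Term → Term) (A : Atom Rel) : Atom Rel :=
  ⟨A.rel, h A.src, h A.tgt⟩

/-- The image under `h` of a path: apply `h` to every element and every atom. -/
def mapPath (h : Term → Term) (P : List (Atom Rel × Term)) :
    List (Atom Rel × Term) :=
  P.map (fun s => (s.1.mapTerms h, h s.2))

end KGQuery

/-!
Containment `q ⊆ q'` yields a homomorphism `h : q' → q`, read off from an answer of `q'` on the
canonical database of `q`. Orient the tree `q'` towards its root by breadth-first search; as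
`q'` has depth at most `d`, every node `n` is within distance `d` of the root. Mapping the
root-to-`n` path by `h` and cancelling backtracking steps gives a valid path `V n` of `q` of
length at most `d` ending at `h n`, and `n ↦ o_{V n}` is a homomorphism `q' → q̃_d`: a tree has
exactly one atom per non-root node, namely the atom joining it to its parent, and `V n`,
`V (parent n)` differ by one step through the image of that atom. A homomorphism `q' → q̃_d`
gives `q̃_d ⊆ q'`.
-/

namespace KGQuery

section ReachIn

variable {α : Type*} {r : α → α → Prop} {k : ℕ} {a b c : α}

theorem reachIn_refl : ∀ (k : ℕ) (a : α), ReachIn r k a a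
  | 0, _ => rfl
  | _ + 1, _ => Or.inl rfl

theorem ReachIn.snoc (hab : ReachIn r k a b) (hbc : r b c) : ReachIn r (k + 1) a c := by
  induction k generalizing a with
  | zero => exact Or.inr ⟨c, hab ▸ hbc, rfl⟩
  | succ k ih =>
    rcases hab with rfl | ⟨a', haa', ha'b⟩
    · exact Or.inr ⟨c, hbc, reachIn_refl _ _⟩
    · exact Or.inr ⟨a', haa', ih ha'b⟩

theorem ReachIn.symm (hr : ∀ x y, r x y → r y x) (hab : ReachIn r k a b) : ReachIn r k b a := by
  induction k generalizing a b with
  | zero => exact hab.symm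
  | succ k ih =>
    rcases hab with rfl | ⟨c, hac, hcb⟩
    · exact Or.inl rfl
    · exact (ih hcb).snoc (hr _ _ hac)

/-- Junk value `0` when `b` is unreachable from `a`. -/
noncomputable def reachDist (r : α → α → Prop) (a b : α) : ℕ := sInf {k | ReachIn r k a b}

theorem reachDist_le (hab : ReachIn r k a b) : reachDist r a b ≤ k := Nat.sInf_le hab

theorem reachIn_reachDist (hab : ReachIn r k a b) : ReachIn r (reachDist r a b) a b :=
  Nat.sInf_mem (s := {k | ReachIn r k a b}) ⟨k, hab⟩

theorem reachDist_self (a : α) : reachDist r a a = 0 :=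
  Nat.sInf_eq_zero.mpr (Or.inl (reachIn_refl (r := r) 0 a))

theorem exists_reachDist_eq_succ (hab : ReachIn r k a b) (hne : a ≠ b) :
    ∃ c, r a c ∧ reachDist r c b + 1 = reachDist r a b := by
  have hmin := reachIn_reachDist hab
  obtain ⟨m, hm⟩ : ∃ m, reachDist r a b = m + 1 :=
    Nat.exists_eq_succ_of_ne_zero fun h0 => hne (by rwa [h0] at hmin)
  rw [hm] at hmin
  obtain rfl | ⟨c, hac, hcb⟩ := hmin
  · exact absurd rfl hne
  refine ⟨c, hac, le_antisymm ?_ ?_⟩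
  · have := reachDist_le hcb
    omega
  · exact reachDist_le (k := reachDist r c b + 1) (Or.inr ⟨c, hac, reachIn_reachDist hcb⟩)

end ReachIn

variable {Rel : Type}

section Containment

variable {q q' : CQ Rel}

theorem CQ.cons_finite (q : CQ Rel) : q.cons.Finite := by
  have hterms : q.terms.Finite := by
    refine ((q.atoms.finite_toSet.image Atom.src).union
      (q.atoms.finite_toSet.image Atom.tgt)).subset ?_
    rintro t ⟨A, hA, rfl | rfl⟩
    exacts [Or.inl ⟨A, hA, rfl⟩, Or.inr ⟨A, hA, rfl⟩]
  exact hterms.preimage fun _ _ _ _ => Term.con.inj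

def decodeTerm (N : ℕ) (c : Con) : Term := if N ≤ c then .var (c - N) else .con c

theorem decodeTerm_termToCon {N : ℕ} {t : Term} (ht : ∀ c, t = .con c → c < N) :
    decodeTerm N (termToCon (· + N) t) = t := by
  cases t with
  | var v => simp [decodeTerm, termToCon]
  | con c => simp [decodeTerm, termToCon, Nat.not_le.mpr (ht c rfl)]

theorem IsHom.cons_subset {g : Term → Term} (hg : IsHom q' q g) : q'.cons ⊆ q.cons := by
  intro c hc
  obtain ⟨A, hA, hsrc | htgt⟩ := id hc
  · exact ⟨_, hg.2.2 A hA, Or.inl (by simp only [hsrc, hg.2.1 c hc])⟩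
  · exact ⟨_, hg.2.2 A hA, Or.inr (by simp only [htgt, hg.2.1 c hc])⟩

theorem IsHom.contained {g : Term → Term} (hg : IsHom q' q g) : q.contained q' := by
  rintro G a ⟨μ, hμ_cons, hμ_target, hμ_atoms⟩
  refine ⟨μ ∘ g, fun c hc => ?_, by simp [hg.1, hμ_target], fun A hA => hμ_atoms _ (hg.2.2 A hA)⟩
  simp [hg.2.1 c hc, hμ_cons c (hg.cons_subset hc)]

/-- Evaluating `q'` on the canonical database of `q`, in which the variables of `q` are
renamed to constants beyond all constants of `q` and `q'`, yields a homomorphism `q' → q`. -/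
theorem exists_isHom_of_contained (h : q.contained q') : ∃ g, IsHom q' q g := by
  classical
  obtain ⟨M, hM⟩ := (q.cons_finite.union q'.cons_finite).bddAbove
  have hlt : ∀ c ∈ q.cons ∪ q'.cons, c < M + 1 := fun c hc => Nat.lt_succ_of_le (hM hc)
  have hdecode : ∀ t ∈ q.terms, decodeTerm (M + 1) (termToCon (· + (M + 1)) t) = t :=
    fun t ht => decodeTerm_termToCon fun c hc => hlt c (Or.inl (by rwa [hc] at ht))
  have hans : q.target + (M + 1) ∈ q.answer (canonicalDB q (· + (M + 1))) :=
    ⟨termToCon _, fun _ _ => rfl, rfl, fun A hA => Finset.mem_image_of_mem _ hA⟩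
  obtain ⟨ν, hν_cons, hν_target, hν_atoms⟩ := h _ hans
  refine ⟨decodeTerm (M + 1) ∘ ν, ?_, fun c hc => ?_, fun A hA => ?_⟩
  · obtain ⟨A, hA, hx⟩ := q.target_occurs
    simp only [Function.comp_apply, hν_target]
    exact hdecode (.var q.target) ⟨A, hA, hx⟩
  · simp [hν_cons c hc, decodeTerm, hM (Or.inr hc)]
  · obtain ⟨A₀, hA₀, hA₀A⟩ := Finset.mem_image.mp (hν_atoms A hA)
    obtain ⟨hrel, hsrc, htgt⟩ := Fact.mk.inj hA₀A
    convert hA₀ using 1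
    rw [Function.comp_apply, Function.comp_apply, ← hrel, ← hsrc, ← htgt,
      hdecode _ ⟨A₀, hA₀, Or.inl rfl⟩, hdecode _ ⟨A₀, hA₀, Or.inr rfl⟩]

theorem contained_iff_exists_isHom : q.contained q' ↔ ∃ g, IsHom q' q g :=
  ⟨exists_isHom_of_contained, fun ⟨_, hg⟩ => hg.contained⟩

end Containment

section Paths

variable {q : CQ Rel}

def pathEndFrom (x : Term) (P : List (Atom Rel × Term)) : Term :=
  match P.getLast? with
  | none => x
  | some s => s.2

theorem pathEnd_eq_pathEndFrom (q : CQ Rel) (P : List (Atom Rel × Term)) :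
    pathEnd q P = pathEndFrom (.var q.target) P := rfl

@[simp] theorem pathEndFrom_nil (x : Term) : pathEndFrom x ([] : List (Atom Rel × Term)) = x :=
  rfl

@[simp] theorem pathEndFrom_concat (x : Term) (P : List (Atom Rel × Term))
    (s : Atom Rel × Term) : pathEndFrom x (P ++ [s]) = s.2 := by
  simp [pathEndFrom]

theorem pathEndFrom_cons (x v : Term) (B : Atom Rel) (P : List (Atom Rel × Term)) :
    pathEndFrom x ((B, v) :: P) = pathEndFrom v P := by
  rcases List.eq_nil_or_concat' P with rfl | ⟨L, s, rfl⟩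
  · rfl
  · rw [← List.cons_append, pathEndFrom_concat, pathEndFrom_concat]

@[simp] theorem pathEnd_concat (q : CQ Rel) (P : List (Atom Rel × Term))
    (s : Atom Rel × Term) : pathEnd q (P ++ [s]) = s.2 :=
  pathEndFrom_concat _ P s

theorem isPathFrom_concat {x : Term} {P : List (Atom Rel × Term)} {A : Atom Rel} {e : Term} :
    IsPathFrom q x (P ++ [(A, e)]) ↔
      IsPathFrom q x P ∧ A ∈ q.atoms ∧ Traverses A (pathEndFrom x P) e := by
  induction P generalizing x with
  | nil => simp [IsPathFrom]
  | cons s P ih =>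
    obtain ⟨B, v⟩ := s
    simp only [List.cons_append, IsPathFrom, ih, pathEndFrom_cons, and_assoc]

theorem isValidPath_concat {P : List (Atom Rel × Term)} {B : Atom Rel} {w : Term} :
    IsValidPath q (P ++ [(B, w)]) ↔ IsValidPath q P ∧ B ∈ q.atoms ∧
      Traverses B (pathEnd q P) w ∧ ∀ s ∈ P.getLast?, s.1 ≠ B := by
  simp only [IsValidPath, IsPath, isPathFrom_concat, ← pathEnd_eq_pathEndFrom, IsValid,
    List.map_append, List.Chain', List.isChain_append, List.map_cons, List.map_nil,
    List.isChain_singleton, List.head?_cons, Option.mem_def, Option.some.injEq, forall_eq',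
    List.getLast?_map, Option.map_eq_some_iff, forall_exists_index, and_imp,
    forall_apply_eq_imp_iff₂, true_and]
  tauto

theorem Traverses.eq_of_traverses {A : Atom Rel} {u v w : Term} (huv : Traverses A u v)
    (hvw : Traverses A v w) : w = u := by
  rcases huv with ⟨rfl, rfl⟩ | ⟨rfl, rfl⟩ <;> rcases hvw with ⟨h₁, h₂⟩ | ⟨h₁, h₂⟩ <;>
    simp_all

theorem Traverses.mapTerms {A : Atom Rel} {u v : Term} (h : Traverses A u v) (f : Term → Term) :
    Traverses (A.mapTerms f) (f u) (f v) := by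
  rcases h with ⟨rfl, rfl⟩ | ⟨rfl, rfl⟩
  exacts [Or.inl ⟨rfl, rfl⟩, Or.inr ⟨rfl, rfl⟩]

/-- Two paths are joined through `B` in the unraveling when one extends the other by a
step through `B`. -/
def PathAdj (B : Atom Rel) (u v : List (Atom Rel × Term)) : Prop :=
  (∃ t, v = u ++ [(B, t)]) ∨ (∃ t, u = v ++ [(B, t)])

theorem PathAdj.symm {B : Atom Rel} {u v : List (Atom Rel × Term)} (h : PathAdj B u v) :
    PathAdj B v u :=
  Or.symm h

theorem PathAdj.length_le {B : Atom Rel} {u v : List (Atom Rel × Term)} (h : PathAdj B u v) :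
    v.length ≤ u.length + 1 := by
  rcases h with ⟨t, rfl⟩ | ⟨t, rfl⟩ <;>
    simp only [List.length_append, List.length_singleton] <;> omega

theorem isValidPath_validAppend [DecidableEq Rel] {V : List (Atom Rel × Term)}
    (hV : IsValidPath q V) {B : Atom Rel} (hB : B ∈ q.atoms) {w : Term}
    (hT : Traverses B (pathEnd q V) w) :
    IsValidPath q (validAppend V (B, w)) ∧ pathEnd q (validAppend V (B, w)) = w ∧
      PathAdj B V (validAppend V (B, w)) := by
  rcases List.eq_nil_or_concat' V with rfl | ⟨L, ⟨A, e⟩, rfl⟩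
  · exact ⟨isValidPath_concat (P := []).mpr ⟨⟨trivial, List.isChain_nil⟩, hB, hT, by simp⟩,
      rfl, Or.inl ⟨w, rfl⟩⟩
  obtain ⟨hL, -, hTL, -⟩ := isValidPath_concat.mp hV
  rw [pathEnd_concat] at hT
  by_cases hAB : A = B
  · subst hAB
    have hback : validAppend (L ++ [(A, e)]) (A, w) = L := by simp [validAppend]
    rw [hback, hTL.eq_of_traverses hT]
    exact ⟨hL, rfl, Or.inr ⟨e, rfl⟩⟩
  · have hext : validAppend (L ++ [(A, e)]) (B, w) = L ++ [(A, e)] ++ [(B, w)] := by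
      simp [validAppend, hAB]
    rw [hext]
    exact ⟨isValidPath_concat.mpr ⟨hV, hB, by simpa using hT, by simpa using hAB⟩,
      pathEnd_concat _ _ _, Or.inl ⟨w, rfl⟩⟩

theorem oTerm_nil (q : CQ Rel) (enc : List (Atom Rel × Term) → Var) :
    oTerm q enc [] = .var (enc []) := rfl

theorem mem_unravelAtoms_of_pathAdj {enc : List (Atom Rel × Term) → Var}
    {d : ℕ} {B : Atom Rel} {u v : List (Atom Rel × Term)} (hu : IsValidPath q u)
    (hv : IsValidPath q v) (hud : u.length ≤ d) (hvd : v.length ≤ d) (hadj : PathAdj B u v)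
    (hsrc : B.src = pathEnd q u) (htgt : B.tgt = pathEnd q v) :
    (⟨B.rel, oTerm q enc u, oTerm q enc v⟩ : Atom Rel) ∈ UnravelAtoms q enc d := by
  rcases hadj with ⟨t, rfl⟩ | ⟨t, rfl⟩
  · exact ⟨u, B, t, hv, by simpa using hvd, Or.inl ⟨hsrc, by simpa using htgt, rfl⟩⟩
  · exact ⟨v, B, t, hu, by simpa using hud, Or.inr ⟨by simpa using hsrc, htgt, rfl⟩⟩

end Paths

section QueryGraph

variable {q : CQ Rel} {A : Atom Rel} {m n : QNode Rel}

def nodeTerm : QNode Rel → Term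
  | .inl v => .var v
  | .inr (A, b) => A.pos b

theorem nodeTerm_endpointNode (A : Atom Rel) (b : Bool) :
    nodeTerm (endpointNode A b) = A.pos b := by
  unfold endpointNode
  split <;> simp_all [nodeTerm]

theorem endpointNode_mem_nodeSet (hA : A ∈ q.atoms) (b : Bool) :
    endpointNode A b ∈ nodeSet q := by
  unfold endpointNode
  split
  · next v hv => exact Or.inl ⟨v, ⟨A, hA, by cases b <;> simp_all [Atom.pos]⟩, rfl⟩
  · next c hc => exact Or.inr ⟨A, hA, b, ⟨c, hc⟩, rfl⟩

theorem rootNode_mem_nodeSet (q : CQ Rel) : rootNode q ∈ nodeSet q :=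
  Or.inl ⟨q.target, q.target_occurs, rfl⟩

theorem eq_inl_of_nodeTerm_eq_var (hn : n ∈ nodeSet q) {v : Var}
    (hv : nodeTerm n = .var v) : n = .inl v := by
  rcases hn with ⟨w, -, rfl⟩ | ⟨A, -, b, ⟨c, hc⟩, rfl⟩
  · simpa [nodeTerm] using hv
  · simp_all [nodeTerm]

theorem mem_cons_of_nodeTerm_eq_con (hn : n ∈ nodeSet q) {c : Con}
    (hc : nodeTerm n = .con c) : c ∈ q.cons := by
  rcases hn with ⟨w, -, rfl⟩ | ⟨A, hA, b, -, rfl⟩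
  · simp [nodeTerm] at hc
  · refine ⟨A, hA, ?_⟩
    cases b
    exacts [Or.inl hc, Or.inr hc]

def Joins (A : Atom Rel) (m n : QNode Rel) : Prop :=
  (m = endpointNode A false ∧ n = endpointNode A true) ∨
    (m = endpointNode A true ∧ n = endpointNode A false)

theorem adj_iff_exists_joins : Adj q m n ↔ ∃ A ∈ q.atoms, Joins A m n := Iff.rfl

theorem Joins.symm (h : Joins A m n) : Joins A n m := by
  unfold Joins at h ⊢
  tauto

theorem adj_symm (m n : QNode Rel) (h : Adj q m n) : Adj q n m := by
  obtain ⟨A, hA, hj⟩ := adj_iff_exists_joins.mp h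
  exact ⟨A, hA, hj.symm⟩

theorem Joins.right_mem_nodeSet (h : Joins A m n) (hA : A ∈ q.atoms) : n ∈ nodeSet q := by
  rcases h with ⟨-, rfl⟩ | ⟨-, rfl⟩ <;> exact endpointNode_mem_nodeSet hA _

theorem Joins.traverses (h : Joins A m n) : Traverses A (nodeTerm m) (nodeTerm n) := by
  rcases h with ⟨rfl, rfl⟩ | ⟨rfl, rfl⟩ <;> simp [nodeTerm_endpointNode, Traverses, Atom.pos]

theorem Joins.eq_of_ne {m' n' : QNode Rel} (h : Joins A m n) (h' : Joins A m' n')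
    (hne : m ≠ m') : n = m' := by
  rcases h with ⟨rfl, rfl⟩ | ⟨rfl, rfl⟩ <;> rcases h' with ⟨rfl, rfl⟩ | ⟨rfl, rfl⟩ <;>
    simp_all

theorem Joins.endpoints {R : QNode Rel → QNode Rel → Prop} (hR : ∀ x y, R x y → R y x)
    (h : Joins A m n) (hmn : R m n) : R (endpointNode A false) (endpointNode A true) := by
  rcases h with ⟨rfl, rfl⟩ | ⟨rfl, rfl⟩
  exacts [hmn, hR _ _ hmn]

end QueryGraph

structure ParentMap (q : CQ Rel) where
  dist : QNode Rel → ℕ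
  parent : QNode Rel → QNode Rel
  atom : QNode Rel → Atom Rel
  dist_root : dist (rootNode q) = 0
  atom_mem : ∀ n ∈ nodeSet q, n ≠ rootNode q → atom n ∈ q.atoms
  joins : ∀ n ∈ nodeSet q, n ≠ rootNode q → Joins (atom n) n (parent n)
  dist_parent : ∀ n ∈ nodeSet q, n ≠ rootNode q → dist (parent n) + 1 = dist n

namespace ParentMap

variable {q : CQ Rel} {n : QNode Rel}

theorem exists_dist_le {d : ℕ} (hdep : HasDepthLE q d) :
    ∃ P : ParentMap q, ∀ n ∈ nodeSet q, P.dist n ≤ d := by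
  have hreach : ∀ n ∈ nodeSet q, ReachIn (Adj q) d n (rootNode q) :=
    fun n hn => (hdep n hn).symm adj_symm
  have hstep : ∀ n ∈ nodeSet q, n ≠ rootNode q → ∃ A p, A ∈ q.atoms ∧ Joins A n p ∧
      reachDist (Adj q) p (rootNode q) + 1 = reachDist (Adj q) n (rootNode q) := by
    intro n hn hnr
    obtain ⟨p, ⟨A, hA, hj⟩, hdist⟩ := exists_reachDist_eq_succ (hreach n hn) hnr
    exact ⟨A, p, hA, hj, hdist⟩
  have : Nonempty (Atom Rel) := ⟨q.atoms_nonempty.choose⟩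
  choose! atom parent hatom hjoins hdist using hstep
  exact ⟨⟨fun n => reachDist (Adj q) n (rootNode q), parent, atom, reachDist_self _,
    hatom, hjoins, hdist⟩, fun n hn => reachDist_le (hreach n hn)⟩

section Tree

variable (P : ParentMap q)

theorem parent_mem (hn : n ∈ nodeSet q) (hnr : n ≠ rootNode q) : P.parent n ∈ nodeSet q :=
  (P.joins n hn hnr).right_mem_nodeSet (P.atom_mem n hn hnr)

theorem atom_injOn : Set.InjOn P.atom (nodeSet q \ {rootNode q}) := by
  rintro n ⟨hn, hnr⟩ n' ⟨hn', hnr'⟩ heq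
  by_contra hne
  have hj := P.joins n hn hnr
  have hj' := P.joins n' hn' hnr'
  rw [heq] at hj
  have h₁ := P.dist_parent n hn hnr
  have h₂ := P.dist_parent n' hn' hnr'
  rw [hj.eq_of_ne hj' hne] at h₁
  rw [hj'.eq_of_ne hj (Ne.symm hne)] at h₂
  omega

/-- A tree has one atom fewer than nodes, so the injective parent-atom map is onto. -/
theorem atom_surjOn (htree : IsTreeLike q) :
    Set.SurjOn P.atom (nodeSet q \ {rootNode q}) q.atoms := by
  have hfin : (nodeSet q).Finite := Set.finite_of_ncard_ne_zero (by rw [htree.2]; omega)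
  have hcard := Set.ncard_sdiff_singleton_add_one (rootNode_mem_nodeSet q) hfin
  have hsub : P.atom '' (nodeSet q \ {rootNode q}) ⊆ q.atoms := by
    rintro _ ⟨n, ⟨hn, hnr⟩, rfl⟩
    exact P.atom_mem n hn hnr
  refine (Set.eq_of_subset_of_ncard_le hsub ?_ q.atoms.finite_toSet).symm.subset
  rw [P.atom_injOn.ncard_image, Set.ncard_coe_finset]
  have := htree.2
  omega

end Tree

section Unraveling

variable [DecidableEq Rel] {q' : CQ Rel} (P : ParentMap q') (h : Term → Term)

/-- The path from the root to `n` along parent pointers, mapped by `h` and made valid. -/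
def imagePath (n : QNode Rel) : List (Atom Rel × Term) :=
  go (P.dist n) n
where
  go : ℕ → QNode Rel → List (Atom Rel × Term)
    | 0, _ => []
    | k + 1, n => validAppend (go k (P.parent n)) ((P.atom n).mapTerms h, h (nodeTerm n))

theorem imagePath_root : P.imagePath h (rootNode q') = [] := by
  simp [imagePath, P.dist_root, imagePath.go]

theorem imagePath_of_ne_root (hn : n ∈ nodeSet q') (hnr : n ≠ rootNode q') :
    P.imagePath h n =
      validAppend (P.imagePath h (P.parent n)) ((P.atom n).mapTerms h, h (nodeTerm n)) := by
  simp only [imagePath, ← P.dist_parent n hn hnr, imagePath.go]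

variable {h}

theorem imagePath_step (hh : IsHom q' q h) (hn : n ∈ nodeSet q') (hnr : n ≠ rootNode q')
    (hp : IsValidPath q (P.imagePath h (P.parent n)))
    (hp_end : pathEnd q (P.imagePath h (P.parent n)) = h (nodeTerm (P.parent n))) :
    IsValidPath q (P.imagePath h n) ∧ pathEnd q (P.imagePath h n) = h (nodeTerm n) ∧
      PathAdj ((P.atom n).mapTerms h) (P.imagePath h (P.parent n)) (P.imagePath h n) := by
  have hT := ((P.joins n hn hnr).symm.traverses).mapTerms h
  rw [← hp_end] at hT
  rw [P.imagePath_of_ne_root h hn hnr]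
  exact isValidPath_validAppend hp (hh.2.2 _ (P.atom_mem n hn hnr)) hT

theorem imagePath_spec (hh : IsHom q' q h) (hn : n ∈ nodeSet q') :
    IsValidPath q (P.imagePath h n) ∧ pathEnd q (P.imagePath h n) = h (nodeTerm n) ∧
      (P.imagePath h n).length ≤ P.dist n := by
  induction hk : P.dist n using Nat.strong_induction_on generalizing n with
  | _ k ih =>
  by_cases hnr : n = rootNode q'
  · subst hnr
    rw [imagePath_root]
    exact ⟨⟨trivial, List.isChain_nil⟩, hh.1.symm, Nat.zero_le _⟩
  have hdist := P.dist_parent n hn hnr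
  obtain ⟨hp, hp_end, hp_len⟩ := ih _ (by omega) (P.parent_mem hn hnr) rfl
  obtain ⟨hvalid, hend, hadj⟩ := P.imagePath_step hh hn hnr hp hp_end
  exact ⟨hvalid, hend, by have := hadj.length_le; omega⟩

variable (h)

def unravelHom (q : CQ Rel) (enc : List (Atom Rel × Term) → Var) : Term → Term
  | .var v => oTerm q enc (P.imagePath h (.inl v))
  | .con c => .con c

variable {h}

theorem unravelHom_nodeTerm (hh : IsHom q' q h) (enc : List (Atom Rel × Term) → Var)
    (hn : n ∈ nodeSet q') :
    P.unravelHom h q enc (nodeTerm n) = oTerm q enc (P.imagePath h n) := by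
  rcases hterm : nodeTerm n with v | c
  · rw [eq_inl_of_nodeTerm_eq_var hn hterm]
    rfl
  · have hend : pathEnd q (P.imagePath h n) = .con c := by
      rw [(P.imagePath_spec hh hn).2.1, hterm, hh.2.1 c (mem_cons_of_nodeTerm_eq_con hn hterm)]
    simp [unravelHom, oTerm, hend]

theorem unravelHom_atom_mem (hh : IsHom q' q h) (enc : List (Atom Rel × Term) → Var) {d : ℕ}
    (hPd : ∀ n ∈ nodeSet q', P.dist n ≤ d) (hn : n ∈ nodeSet q') (hnr : n ≠ rootNode q') :
    (⟨(P.atom n).rel, P.unravelHom h q enc (P.atom n).src,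
      P.unravelHom h q enc (P.atom n).tgt⟩ : Atom Rel) ∈ UnravelAtoms q enc d := by
  set A := P.atom n
  have hend : ∀ b, endpointNode A b ∈ nodeSet q' := endpointNode_mem_nodeSet (P.atom_mem n hn hnr)
  have hspec := fun b => P.imagePath_spec hh (hend b)
  have hterm : ∀ b,
      P.unravelHom h q enc (A.pos b) = oTerm q enc (P.imagePath h (endpointNode A b)) :=
    fun b => by rw [← P.unravelHom_nodeTerm hh enc (hend b), nodeTerm_endpointNode]
  have hpath_end : ∀ b, (A.mapTerms h).pos b = pathEnd q (P.imagePath h (endpointNode A b)) :=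
    fun b => by rw [(hspec b).2.1, nodeTerm_endpointNode]; cases b <;> rfl
  obtain ⟨hp, hp_end, -⟩ := P.imagePath_spec hh (P.parent_mem hn hnr)
  have hadj := (P.joins n hn hnr).endpoints
    (R := fun x y => PathAdj (A.mapTerms h) (P.imagePath h x) (P.imagePath h y))
    (fun _ _ => PathAdj.symm) (P.imagePath_step hh hn hnr hp hp_end).2.2.symm
  exact hterm false ▸ hterm true ▸ mem_unravelAtoms_of_pathAdj (B := A.mapTerms h)
    (hspec false).1 (hspec true).1 ((hspec false).2.2.trans (hPd _ (hend false)))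
    ((hspec true).2.2.trans (hPd _ (hend true))) hadj (hpath_end false) (hpath_end true)

end Unraveling

end ParentMap

theorem exists_isHom_unraveling {q q' qd : CQ Rel} {d : ℕ} {h : Term → Term}
    {enc : List (Atom Rel × Term) → Var} (htree : IsTreeLike q') (hdep : HasDepthLE q' d)
    (hh : IsHom q' q h) (hu : IsUnraveling q enc d qd) : ∃ g, IsHom q' qd g := by
  classical
  obtain ⟨P, hPd⟩ := ParentMap.exists_dist_le hdep
  refine ⟨P.unravelHom h q enc, ?_, fun c _ => rfl, fun A hA => ?_⟩
  · rw [hu.2.1, ← oTerm_nil q enc, ← P.imagePath_root h]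
    exact P.unravelHom_nodeTerm hh enc (rootNode_mem_nodeSet q')
  obtain ⟨n, ⟨hn, hnr⟩, rfl⟩ := P.atom_surjOn htree hA
  rw [← Finset.mem_coe, hu.2.2]
  exact P.unravelHom_atom_mem hh enc hPd hn hnr

theorem unraveling_optimal_general {Rel : Type}
    (q q' : CQ Rel) (d : ℕ)
    (htree : IsTreeLike q') (happrox : q.contained q') (hdep : HasDepthLE q' d)
    (enc : List (Atom Rel × Term) → Var) (qd : CQ Rel)
    (hu : IsUnraveling q enc d qd) :
    qd.contained q' := by
  obtain ⟨h, hh⟩ := contained_iff_exists_isHom.mp happrox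
  exact contained_iff_exists_isHom.mpr (exists_isHom_unraveling htree hdep hh hu)

/-- Optimality of unravelings. Let `q(x)` be a CQ and `d ≥ 1`.
If `q'(x)` is a complete tree-like approximation of `q` of depth at most `d`,
then `q̃_d ⊆ q'`. -/
theorem unraveling_optimal {Rel : Type} [Fintype Rel] [DecidableEq Rel]
    (q q' : CQ Rel) (htgt : q'.target = q.target) (d : ℕ) (hd : 1 ≤ d)
    (htree : IsTreeLike q') (happrox : q.contained q') (hdep : HasDepthLE q' d)
    (enc : List (Atom Rel × Term) → Var) (qd : CQ Rel)
    (hu : IsUnraveling q enc d qd) :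
    qd.contained q' :=
  unraveling_optimal_general q q' d htree happrox hdep enc qd hu

end KGQuery
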